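/- Let λ > 0, μ > 0, τ ≥ 0, σ ≥ 0, let D : ℝ^n → (ℝ²)^N be a linear map with adjoint Dᵀ, f ∈ ℝ^n, and let G : ℝ^n → ℝ^N be continuous. Suppose sequences uᵏ ∈ ℝ^n and vᵏ, Λᵏ, sᵏ ∈ (ℝ²)^N satisfy, for every k: (i) λ(uᵏ⁺¹ − f) + Dᵀ(μ(Duᵏ⁺¹ − vᵏ) − Λᵏ) + τ(uᵏ⁺¹ − uᵏ) = 0; (ii) for each component 1 ≤ i ≤ N, sᵏ⁺¹ᵢ is a subgradient of the Euclidean norm |·| on ℝ² at vᵏ⁺¹ᵢ and Gᵢ(uᵏ⁺¹) sᵏ⁺¹ᵢ + μ(vᵏ⁺¹ᵢ − (Duᵏ⁺¹)ᵢ) + Λᵏᵢ + σ(vᵏ⁺¹ᵢ − vᵏᵢ) = 0; (iii) Λᵏ⁺¹ = Λᵏ + μ(vᵏ⁺¹ − Duᵏ⁺¹). If uᵏ → u*, vᵏ → v*, Λᵏ → Λ*, and sᵏ → s* as k → ∞, then the limit point satisfies the first-order optimality conditions: v* = Du*, λ(u* − f) − DᵀΛ* = 0, and for each i, s*ᵢ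 is a subgradient of |·| at v*ᵢ with Gᵢ(u*) s*ᵢ + Λ*ᵢ = 0. -/

import Mathlib

open scoped RealInnerProductSpace
open Filter Topology

/-!
Every condition of the iteration is an equation or inequality between continuous expressions
in the iterates, so it survives the passage to the limit. The only terms that do not simply
pass to their limit are the proximal terms `τ (uᵏ⁺¹ − uᵏ)`, `σ (vᵏ⁺¹ − vᵏ)` and the primal
residual `vᵏ⁺¹ − Duᵏ⁺¹`: the first two vanish because consecutive iterates of a convergent
sequence have the same limit, and the multiplier update writes `μ (vᵏ⁺¹ − Duᵏ⁺¹)` as the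
difference `Λᵏ⁺¹ − Λᵏ`, which tends to `0`, so that `v* = Du*` since `μ ≠ 0`.
-/

def HasSubgradientAt {E : Type*} [NormedAddCommGroup E] [InnerProductSpace ℝ E]
    (φ : E → ℝ) (s v : E) : Prop :=
  ∀ w, φ w ≥ φ v + ⟪s, w - v⟫

theorem HasSubgradientAt.of_tendsto {E : Type*} [NormedAddCommGroup E] [InnerProductSpace ℝ E]
    {φ : E → ℝ} (hφ : Continuous φ) {s v : ℕ → E} {s' v' : E}
    (hs : Tendsto s atTop (𝓝 s')) (hv : Tendsto v atTop (𝓝 v'))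
    (h : ∀ k, HasSubgradientAt φ (s k) (v k)) : HasSubgradientAt φ s' v' := fun w =>
  le_of_tendsto ((hφ.tendsto v' |>.comp hv).add (hs.inner (tendsto_const_nhds.sub hv)))
    (Eventually.of_forall fun k => h k w)

theorem eq_zero_of_tendsto_of_forall_eq_zero {X : Type*} [TopologicalSpace X] [T2Space X]
    [Zero X] {F : ℕ → X} {L : X} (hF : Tendsto F atTop (𝓝 L)) (h : ∀ k, F k = 0) : L = 0 :=
  tendsto_nhds_unique hF (tendsto_const_nhds.congr fun k => (h k).symm)

theorem eq_zero_of_tendsto_of_add_smul {𝕜 E : Type*} [DivisionRing 𝕜] [AddCommGroup E]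
    [Module 𝕜 E] [TopologicalSpace E] [IsTopologicalAddGroup E] [ContinuousConstSMul 𝕜 E]
    [T2Space E] {μ : 𝕜} (hμ : μ ≠ 0) {Λ r : ℕ → E} {Λ' r' : E}
    (hΛ : Tendsto Λ atTop (𝓝 Λ')) (hr : Tendsto r atTop (𝓝 r'))
    (h : ∀ k, Λ (k + 1) = Λ k + μ • r (k + 1)) : r' = 0 := by
  have hdiff : Tendsto (fun k => Λ (k + 1) - Λ k) atTop (𝓝 (Λ' - Λ')) :=
    ((tendsto_add_atTop_iff_nat 1).2 hΛ).sub hΛ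
  have hμr : μ • r' = 0 := by
    refine tendsto_nhds_unique (((tendsto_add_atTop_iff_nat 1).2 hr).const_smul μ) ?_
    simpa only [h, add_sub_cancel_left, sub_self] using hdiff
  exact (smul_eq_zero.1 hμr).resolve_left hμ

theorem stmt9_general {n N : ℕ} (lam μ τ σ : ℝ) (hμ : 0 < μ)
    (D : EuclideanSpace ℝ (Fin n) →L[ℝ]
      PiLp 2 (fun _ : Fin N => EuclideanSpace ℝ (Fin 2)))
    (f : EuclideanSpace ℝ (Fin n))
    (G : EuclideanSpace ℝ (Fin n) → Fin N → ℝ) (hG : Continuous G)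
    (u : ℕ → EuclideanSpace ℝ (Fin n))
    (v Λ s : ℕ → PiLp 2 (fun _ : Fin N => EuclideanSpace ℝ (Fin 2)))
    (hi : ∀ k : ℕ,
      lam • (u (k + 1) - f) +
          (ContinuousLinearMap.adjoint D) (μ • (D (u (k + 1)) - v k) - Λ k) +
          τ • (u (k + 1) - u k) = 0)
    (hii : ∀ k : ℕ, ∀ i : Fin N,
      (∀ w : EuclideanSpace ℝ (Fin 2), ‖w‖ ≥ ‖v (k + 1) i‖ + ⟪s (k + 1) i, w - v (k + 1) i⟫) ∧
        G (u (k + 1)) i • s (k + 1) i + μ • (v (k + 1) i - D (u (k + 1)) i) + Λ k i +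
          σ • (v (k + 1) i - v k i) = 0)
    (hiii : ∀ k : ℕ, Λ (k + 1) = Λ k + μ • (v (k + 1) - D (u (k + 1))))
    (ustar : EuclideanSpace ℝ (Fin n))
    (vstar Λstar sstar : PiLp 2 (fun _ : Fin N => EuclideanSpace ℝ (Fin 2)))
    (hu : Tendsto u atTop (𝓝 ustar)) (hv : Tendsto v atTop (𝓝 vstar))
    (hΛ : Tendsto Λ atTop (𝓝 Λstar)) (hs : Tendsto s atTop (𝓝 sstar)) :
    vstar = D ustar ∧
      lam • (ustar - f) - (ContinuousLinearMap.adjoint D) Λstar = 0 ∧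
      ∀ i : Fin N,
        (∀ w : EuclideanSpace ℝ (Fin 2), ‖w‖ ≥ ‖vstar i‖ + ⟪sstar i, w - vstar i⟫) ∧
          G ustar i • sstar i + Λstar i = 0 := by
  have hu₁ := (tendsto_add_atTop_iff_nat 1).2 hu
  have hv₁ := (tendsto_add_atTop_iff_nat 1).2 hv
  have hs₁ := (tendsto_add_atTop_iff_nat 1).2 hs
  have hDu := (D.continuous.tendsto ustar).comp hu
  have hDu₁ := (tendsto_add_atTop_iff_nat 1).2 hDu
  have hfeasible : vstar = D ustar :=
    sub_eq_zero.1 (eq_zero_of_tendsto_of_add_smul hμ.ne' hΛ (hv.sub hDu) hiii)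
  refine ⟨hfeasible, ?_, fun i => ?_⟩
  · have hlim := eq_zero_of_tendsto_of_forall_eq_zero
      ((((hu₁.sub_const f).const_smul lam).add
        ((D.adjoint.continuous.tendsto _).comp (((hDu₁.sub hv).const_smul μ).sub hΛ))).add
        ((hu₁.sub hu).const_smul τ)) hi
    simpa [hfeasible, sub_eq_add_neg] using hlim
  · have hcomp {x : ℕ → PiLp 2 (fun _ : Fin N => EuclideanSpace ℝ (Fin 2))} {x'}
        (hx : Tendsto x atTop (𝓝 x')) : Tendsto (fun k => x k i) atTop (𝓝 (x' i)) :=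
      ((PiLp.continuous_apply 2 _ i).tendsto x').comp hx
    have hGu₁ := (((continuous_apply i).comp hG).tendsto ustar).comp hu₁
    refine ⟨HasSubgradientAt.of_tendsto continuous_norm (hcomp hs₁) (hcomp hv₁)
      fun k => (hii k i).1, ?_⟩
    have hlim := eq_zero_of_tendsto_of_forall_eq_zero
      ((((hGu₁.smul (hcomp hs₁)).add ((hcomp (hv₁.sub hDu₁)).const_smul μ)).add
        (hcomp hΛ)).add ((hcomp (hv₁.sub hv)).const_smul σ)) fun k => (hii k i).2
    simpa [hfeasible] using hlim

/-- limit-point characterization for the proximal ADMM. If the iterates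
`(uᵏ, vᵏ, Λᵏ, sᵏ)` satisfy the optimality conditions (i)–(iii) of the `u`-subproblem,
the `v`-subproblem (with subgradients `sᵏ⁺¹ᵢ` of the Euclidean norm at `vᵏ⁺¹ᵢ`) and the
multiplier update, and converge to `(u*, v*, Λ*, s*)`, then the limit satisfies the
first-order optimality conditions: `v* = Du*`, `λ(u* − f) − DᵀΛ* = 0`, and for each `i`,
`s*ᵢ ∈ ∂|·|(v*ᵢ)` with `Gᵢ(u*) s*ᵢ + Λ*ᵢ = 0`. -/
theorem stmt9 {n N : ℕ} (lam μ τ σ : ℝ) (hlam : 0 < lam) (hμ : 0 < μ)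
    (hτ : 0 ≤ τ) (hσ : 0 ≤ σ)
    (D : EuclideanSpace ℝ (Fin n) →L[ℝ]
      PiLp 2 (fun _ : Fin N => EuclideanSpace ℝ (Fin 2)))
    (f : EuclideanSpace ℝ (Fin n))
    (G : EuclideanSpace ℝ (Fin n) → Fin N → ℝ) (hG : Continuous G)
    (u : ℕ → EuclideanSpace ℝ (Fin n))
    (v Λ s : ℕ → PiLp 2 (fun _ : Fin N => EuclideanSpace ℝ (Fin 2)))
    (hi : ∀ k : ℕ,
      lam • (u (k + 1) - f) +
          (ContinuousLinearMap.adjoint D) (μ • (D (u (k + 1)) - v k) - Λ k) +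
          τ • (u (k + 1) - u k) = 0)
    (hii : ∀ k : ℕ, ∀ i : Fin N,
      (∀ w : EuclideanSpace ℝ (Fin 2), ‖w‖ ≥ ‖v (k + 1) i‖ + ⟪s (k + 1) i, w - v (k + 1) i⟫) ∧
        G (u (k + 1)) i • s (k + 1) i + μ • (v (k + 1) i - D (u (k + 1)) i) + Λ k i +
          σ • (v (k + 1) i - v k i) = 0)
    (hiii : ∀ k : ℕ, Λ (k + 1) = Λ k + μ • (v (k + 1) - D (u (k + 1))))
    (ustar : EuclideanSpace ℝ (Fin n))
    (vstar Λstar sstar : PiLp 2 (fun _ : Fin N => EuclideanSpace ℝ (Fin 2)))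
    (hu : Tendsto u atTop (𝓝 ustar)) (hv : Tendsto v atTop (𝓝 vstar))
    (hΛ : Tendsto Λ atTop (𝓝 Λstar)) (hs : Tendsto s atTop (𝓝 sstar)) :
    vstar = D ustar ∧
      lam • (ustar - f) - (ContinuousLinearMap.adjoint D) Λstar = 0 ∧
      ∀ i : Fin N,
        (∀ w : EuclideanSpace ℝ (Fin 2), ‖w‖ ≥ ‖vstar i‖ + ⟪sstar i, w - vstar i⟫) ∧
          G ustar i • sstar i + Λstar i = 0 :=
  stmt9_general lam μ τ σ hμ D f G hG u v Λ s hi hii hiii ustar vstar Λstar sstar hu hv hΛ hs
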